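/- Let r ≥ 4 and let D_r be the graph on vertex set {1,…,r} whose edges are {i, i+1} for 1 ≤ i ≤ r−2 together with the edge {r−2, r} (the Dynkin diagram of type D_r). Then the maximal total length of a multipath in D_r equals r(r+1)/2 − 1: every multipath in D_r has total length at most r(r+1)/2 − 1, and there exists a multipath in D_r of total length exactly r(r+1)/2 − 1. (This is the combinatorial content of the paper's result that the maximal degree of a multiplicity-free monomial in the Schubert divisor classes for a group of type D_r is r(r+1)/2 − 1.) -/

import Mathlib

/-- `IsMultipath G ps` says that the list `ps` of lists of vertices is a
multipath in the graph `G`: each member is a nonempty simple path (a list of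
pairwise distinct vertices with consecutive vertices adjacent), and for
`m < m'` the first vertex of the `m`-th path does not occur in the `m'`-th
path. -/
def IsMultipath {α : Type*} (G : SimpleGraph α) (ps : List (List α)) : Prop :=
  (∀ p ∈ ps, p ≠ [] ∧ p.Nodup ∧ p.Chain' G.Adj) ∧
  ps.Pairwise (fun p q => ∀ hp : p ≠ [], p.head hp ∉ q)

/-- The total length of a multipath: the sum of the lengths of its paths. -/
def multipathTotalLength {α : Type*} (ps : List (List α)) : ℕ :=
  (ps.map List.length).sum

/-- The Dynkin diagram of type `D_r`, on vertices `{1,…,r}` (represented by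
`Fin r` with vertex `i` corresponding to `⟨i-1, _⟩`): the edges are
`{i, i+1}` for `1 ≤ i ≤ r - 2` together with the edge `{r-2, r}`. -/
def dynkinD (r : ℕ) : SimpleGraph (Fin r) :=
  SimpleGraph.fromRel (fun a b =>
    ((a : ℕ) + 1 = (b : ℕ) ∧ (b : ℕ) ≤ r - 2) ∨
    ((a : ℕ) = r - 3 ∧ (b : ℕ) = r - 1))

lemma tri_succ (n : ℕ) : (n+1) * (n+2) / 2 = (n+1) + n*(n+1)/2 := by
  obtain ⟨k, hk⟩ := Nat.even_mul_succ_self n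
  have h : (n+1)*(n+2) = n*(n+1) + 2*(n+1) := by ring
  omega

lemma adj_succ {r : ℕ} (hr : 4 ≤ r) {a b : Fin r} (h1 : (a:ℕ) = (b:ℕ) + 1)
    (h2 : (a:ℕ) ≤ r - 2) : (dynkinD r).Adj a b := by
  rw [dynkinD, SimpleGraph.fromRel_adj]
  exact ⟨by simp [Fin.ext_iff]; omega, Or.inr (Or.inl ⟨h1.symm, h2⟩)⟩

lemma adj_special {r : ℕ} (hr : 4 ≤ r) :
    (dynkinD r).Adj ⟨r-1, by omega⟩ ⟨r-3, by omega⟩ := by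
  rw [dynkinD, SimpleGraph.fromRel_adj]
  exact ⟨by simp [Fin.ext_iff]; omega, Or.inr (Or.inr ⟨rfl, rfl⟩)⟩

lemma uniq_zero {r : ℕ} (hr : 4 ≤ r) (x : Fin r)
    (h : (dynkinD r).Adj ⟨0, by omega⟩ x) : x = ⟨1, by omega⟩ := by
  rw [dynkinD, SimpleGraph.fromRel_adj] at h
  have hx := x.isLt
  obtain ⟨hne, h⟩ := h
  apply Fin.ext
  simp only [Fin.val_mk] at h ⊢
  omega

lemma uniq_rm2 {r : ℕ} (hr : 4 ≤ r) (x : Fin r)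
    (h : (dynkinD r).Adj ⟨r-2, by omega⟩ x) : x = ⟨r-3, by omega⟩ := by
  rw [dynkinD, SimpleGraph.fromRel_adj] at h
  have hx := x.isLt
  obtain ⟨hne, h⟩ := h
  apply Fin.ext
  simp only [Fin.val_mk] at h ⊢
  omega

lemma uniq_rm1 {r : ℕ} (hr : 4 ≤ r) (x : Fin r)
    (h : (dynkinD r).Adj ⟨r-1, by omega⟩ x) : x = ⟨r-3, by omega⟩ := by
  rw [dynkinD, SimpleGraph.fromRel_adj] at h
  have hx := x.isLt
  obtain ⟨hne, h⟩ := h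
  apply Fin.ext
  simp only [Fin.val_mk] at h ⊢
  omega

lemma endpoint_of_uniq {r : ℕ} (p : List (Fin r)) (hn : p.Nodup)
    (hc : p.Chain' (dynkinD r).Adj) (v w : Fin r)
    (huniq : ∀ x, (dynkinD r).Adj v x → x = w)
    (i : ℕ) (hi : i < p.length) (hget : p.get ⟨i, hi⟩ = v) :
    i = 0 ∨ i = p.length - 1 := by
  by_contra hcon
  push_neg at hcon
  obtain ⟨h0, h1⟩ := hcon
  have hchain : ∀ j (h : j < p.length - 1), (dynkinD r).Adj (p.get ⟨j, by omega⟩) (p.get ⟨j+1, by omega⟩) :=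
    fun j h => List.isChain_iff_getElem.mp hc j (by omega)
  have hA := hchain (i-1) (by omega)
  have hB := hchain i (by omega)
  have e1 : p.get ⟨i-1+1, by omega⟩ = v := by
    rw [← hget]; congr 1; exact Fin.ext (by simp; omega)
  have eA : p.get ⟨i-1, by omega⟩ = w := huniq _ ((e1 ▸ hA).symm)
  have eB : p.get ⟨i+1, by omega⟩ = w := huniq _ (hget ▸ hB)
  have : (⟨i-1, by omega⟩ : Fin p.length) = ⟨i+1, by omega⟩ :=
    (hn.get_inj_iff).mp (eA.trans eB.symm)
  have := Fin.mk.injEq .. ▸ this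
  omega

lemma no_ham {r : ℕ} (hr : 4 ≤ r) (p : List (Fin r)) (hn : p.Nodup)
    (hc : p.Chain' (dynkinD r).Adj) : p.length ≤ r - 1 := by
  by_contra hlen
  push_neg at hlen
  have hle : p.length ≤ r := by simpa using hn.length_le_card
  have hlen' : p.length = r := by omega
  have hall : ∀ v : Fin r, v ∈ p := by
    intro v
    have h1 : p.toFinset = Finset.univ := by
      apply Finset.eq_univ_of_card
      rw [List.toFinset_card_of_nodup hn, hlen', Fintype.card_fin]
    rw [← List.mem_toFinset, h1]
    exact Finset.mem_univ v
  obtain ⟨i0, e0⟩ := List.mem_iff_get.mp (hall ⟨0, by omega⟩)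
  obtain ⟨i1, e1⟩ := List.mem_iff_get.mp (hall ⟨r-2, by omega⟩)
  obtain ⟨i2, e2⟩ := List.mem_iff_get.mp (hall ⟨r-1, by omega⟩)
  have k0 := endpoint_of_uniq p hn hc _ _ (uniq_zero hr) i0.1 i0.2
    (by rw [← e0])
  have k1 := endpoint_of_uniq p hn hc _ _ (uniq_rm2 hr) i1.1 i1.2
    (by rw [← e1])
  have k2 := endpoint_of_uniq p hn hc _ _ (uniq_rm1 hr) i2.1 i2.2
    (by rw [← e2])
  have d01 : i0 ≠ i1 := by
    intro h; rw [h, e1] at e0; simp [Fin.ext_iff] at e0; omega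
  have d02 : i0 ≠ i2 := by
    intro h; rw [h, e2] at e0; simp [Fin.ext_iff] at e0; omega
  have d12 : i1 ≠ i2 := by
    intro h; rw [h, e2] at e1; simp [Fin.ext_iff] at e1; omega
  have d01' : i0.1 ≠ i1.1 := fun h => d01 (Fin.ext h)
  have d02' : i0.1 ≠ i2.1 := fun h => d02 (Fin.ext h)
  have d12' : i1.1 ≠ i2.1 := fun h => d12 (Fin.ext h)
  omega

lemma bound_aux {r : ℕ} (ps : List (List (Fin r))) (s : Finset (Fin r))
    (h1 : ∀ p ∈ ps, p ≠ [] ∧ p.Nodup)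
    (h2 : ps.Pairwise (fun p q => ∀ hp : p ≠ [], p.head hp ∉ q))
    (h3 : ∀ p ∈ ps, ∀ v ∈ s, v ∉ p) :
    multipathTotalLength ps ≤ (r - s.card) * (r - s.card + 1) / 2 := by
  induction ps generalizing s with
  | nil => simp [multipathTotalLength]
  | cons p ps ih =>
    obtain ⟨hpne, hpnd⟩ := h1 p (List.mem_cons_self)
    have hdisj : Disjoint p.toFinset s := by
      rw [Finset.disjoint_left]
      intro a ha has
      exact h3 p (List.mem_cons_self) a has (List.mem_toFinset.mp ha)
    have hcard : p.length + s.card ≤ r := by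
      have := Finset.card_le_univ (p.toFinset ∪ s)
      rw [Finset.card_union_of_disjoint hdisj, List.toFinset_card_of_nodup hpnd] at this
      simpa using this
    have hplen : 1 ≤ p.length := List.length_pos_iff.mpr hpne
    have hhead : p.head hpne ∈ p := List.head_mem hpne
    have hheadns : p.head hpne ∉ s := fun hmem =>
      h3 p (List.mem_cons_self) _ hmem hhead
    have hs' : (insert (p.head hpne) s).card = s.card + 1 :=
      Finset.card_insert_of_notMem hheadns
    have ihh := ih (insert (p.head hpne) s)
      (fun q hq => h1 q (List.mem_cons_of_mem p hq))
      (List.Pairwise.of_cons h2)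
      (by
        intro q hq v hv
        rcases Finset.mem_insert.mp hv with h | h
        · subst h
          exact (List.pairwise_cons.mp h2).1 q hq hpne
        · exact h3 q (List.mem_cons_of_mem p hq) v h)
    rw [hs'] at ihh
    have htot : multipathTotalLength (p :: ps) = p.length + multipathTotalLength ps := by
      simp [multipathTotalLength]
    rw [htot]
    have hc : s.card + 1 ≤ r := by omega
    obtain ⟨m, hm⟩ : ∃ m, r - s.card = m + 1 := ⟨r - s.card - 1, by omega⟩
    have hm' : r - (s.card + 1) = m := by omega
    rw [hm'] at ihh
    rw [hm, show m + 1 + 1 = m + 2 from rfl]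
    have key := tri_succ m
    omega

lemma upper_bound {r : ℕ} (hr : 4 ≤ r) (ps : List (List (Fin r)))
    (h : IsMultipath (dynkinD r) ps) :
    multipathTotalLength ps ≤ r * (r + 1) / 2 - 1 := by
  obtain ⟨h1, h2⟩ := h
  cases ps with
  | nil => simp [multipathTotalLength]
  | cons p ps =>
    obtain ⟨hpne, hpnd, hpch⟩ := h1 p (List.mem_cons_self)
    have hlen : p.length ≤ r - 1 := no_ham hr p hpnd hpch
    have hb := bound_aux ps { p.head hpne }
      (fun q hq => ⟨(h1 q (List.mem_cons_of_mem p hq)).1,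
                    (h1 q (List.mem_cons_of_mem p hq)).2.1⟩)
      (List.Pairwise.of_cons h2)
      (by
        intro q hq v hv
        rw [Finset.mem_singleton] at hv
        subst hv
        exact (List.pairwise_cons.mp h2).1 q hq hpne)
    rw [Finset.card_singleton] at hb
    obtain ⟨m, rfl⟩ : ∃ m, r = m + 1 := ⟨r - 1, by omega⟩
    have htot : multipathTotalLength (p :: ps) = p.length + multipathTotalLength ps := by
      simp [multipathTotalLength]
    rw [htot, show m + 1 + 1 = m + 2 from rfl]
    simp only [Nat.add_sub_cancel] at hb hlen
    have key := tri_succ m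
    omega

def descPath (r : ℕ) (hr : 0 < r) : ℕ → List (Fin r)
  | 0 => [⟨0, hr⟩]
  | k+1 => ⟨(k+1) % r, Nat.mod_lt _ hr⟩ :: descPath r hr k

lemma descPath_length (r : ℕ) (hr : 0 < r) (k : ℕ) :
    (descPath r hr k).length = k + 1 := by
  induction k with
  | zero => rfl
  | succ k ih => simp [descPath, ih]

lemma descPath_ne_nil (r : ℕ) (hr : 0 < r) (k : ℕ) :
    descPath r hr k ≠ [] := by
  cases k <;> simp [descPath]

lemma descPath_mem (r : ℕ) (hr : 0 < r) (k : ℕ) (hk : k < r) (x : Fin r) :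
    x ∈ descPath r hr k ↔ (x : ℕ) ≤ k := by
  induction k with
  | zero =>
    simp [descPath, Fin.ext_iff]
  | succ k ih =>
    have hk' : k < r := by omega
    have hmod : (k+1) % r = k+1 := Nat.mod_eq_of_lt hk
    simp only [descPath, List.mem_cons, ih hk', Fin.ext_iff, Fin.val_mk, hmod]
    omega

lemma descPath_nodup (r : ℕ) (hr : 0 < r) (k : ℕ) (hk : k < r) :
    (descPath r hr k).Nodup := by
  induction k with
  | zero => simp [descPath]
  | succ k ih =>
    have hk' : k < r := by omega
    refine List.Nodup.cons ?_ (ih hk')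
    intro hmem
    rw [descPath_mem r hr k hk' _] at hmem
    simp only [Fin.val_mk, Nat.mod_eq_of_lt hk] at hmem
    omega

lemma descPath_head (r : ℕ) (hr : 0 < r) (k : ℕ) (hk : k < r) :
    (descPath r hr k).head (descPath_ne_nil r hr k) = ⟨k, hk⟩ := by
  cases k with
  | zero => rfl
  | succ k => simp [descPath, Fin.ext_iff, Nat.mod_eq_of_lt hk]

lemma descPath_chain (r : ℕ) (hr4 : 4 ≤ r) (hr : 0 < r) (k : ℕ) (hk : k ≤ r - 2) :
    (descPath r hr k).Chain' (dynkinD r).Adj := by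
  induction k with
  | zero => exact List.isChain_singleton _
  | succ k ih =>
    have hk' : k ≤ r - 2 := by omega
    rw [descPath]; unfold List.Chain'; rw [List.isChain_cons]
    refine ⟨?_, ih hk'⟩
    intro y hy
    have hy' : y = (descPath r hr k).head (descPath_ne_nil r hr k) := by
      rw [List.head?_eq_head] at hy
      exact (Option.some_injective _ hy).symm
    rw [hy', descPath_head r hr k (by omega)]
    exact adj_succ hr4 (by simp [Nat.mod_eq_of_lt (show k+1 < r by omega)]) 
      (by simp [Nat.mod_eq_of_lt (show k+1 < r by omega)]; omega)

lemma sum_map_succ_range (n : ℕ) :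
    ((List.range n).map (fun k => k + 1)).sum = n * (n + 1) / 2 := by
  induction n with
  | zero => simp
  | succ n ih =>
    rw [List.range_succ, List.map_append, List.sum_append, ih,
      show n + 1 + 1 = n + 2 from rfl]
    simp only [List.map_cons, List.map_nil, List.sum_cons, List.sum_nil]
    have key := tri_succ n
    omega

lemma existence {r : ℕ} (hr : 4 ≤ r) :
    ∃ ps : List (List (Fin r)), IsMultipath (dynkinD r) ps ∧
      multipathTotalLength ps = r * (r + 1) / 2 - 1 := by
  have hr0 : 0 < r := by omega
  set p1 : List (Fin r) := ⟨r-1, by omega⟩ :: descPath r hr0 (r-3) with hp1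
  set tail : List (List (Fin r)) :=
    ((List.range (r-1)).reverse).map (descPath r hr0) with htail
  refine ⟨p1 :: tail, ⟨?_, ?_⟩, ?_⟩
  · -- each member nonempty, nodup, chain
    intro q hq
    rcases List.mem_cons.mp hq with h | h
    · subst h
      refine ⟨by simp [hp1], ?_, ?_⟩
      · refine List.Nodup.cons ?_ (descPath_nodup r hr0 (r-3) (by omega))
        intro hmem
        rw [descPath_mem r hr0 (r-3) (by omega)] at hmem
        simp only [Fin.val_mk] at hmem
        omega
      · rw [hp1]; unfold List.Chain'; rw [List.isChain_cons]
        refine ⟨?_, descPath_chain r hr hr0 (r-3) (by omega)⟩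
        intro y hy
        have hy' : y = (descPath r hr0 (r-3)).head (descPath_ne_nil r hr0 (r-3)) := by
          rw [List.head?_eq_head] at hy
          exact (Option.some_injective _ hy).symm
        rw [hy', descPath_head r hr0 (r-3) (by omega)]
        exact adj_special hr
    · rw [htail, List.mem_map] at h
      obtain ⟨k, hk, rfl⟩ := h
      rw [List.mem_reverse, List.mem_range] at hk
      exact ⟨descPath_ne_nil r hr0 k, descPath_nodup r hr0 k (by omega),
        descPath_chain r hr hr0 k (by omega)⟩
  · -- pairwise head condition
    refine List.Pairwise.cons ?_ ?_
    · intro q hq hp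
      rw [htail, List.mem_map] at hq
      obtain ⟨k, hk, rfl⟩ := hq
      rw [List.mem_reverse, List.mem_range] at hk
      intro hmem
      have hhd : p1.head hp = ⟨r-1, by omega⟩ := rfl
      rw [hhd, descPath_mem r hr0 k (by omega)] at hmem
      simp only [Fin.val_mk] at hmem
      omega
    · rw [htail]
      refine List.pairwise_map.mpr ?_
      rw [List.pairwise_reverse]
      have := List.pairwise_lt_range (n := r-1)
      refine this.imp_of_mem ?_
      intro a b ha hb hab hp hmem
      rw [List.mem_range] at ha hb
      rw [descPath_head r hr0 b (by omega),
        descPath_mem r hr0 a (by omega)] at hmem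
      simp only [Fin.val_mk] at hmem
      omega
  · -- total length
    have hlen1 : p1.length = r - 1 := by
      rw [hp1]
      simp [descPath_length]
      omega
    have hsum : multipathTotalLength tail = (r-1) * (r-1+1) / 2 := by
      rw [htail, multipathTotalLength, List.map_map]
      have : List.length ∘ descPath r hr0 = fun k => k + 1 := by
        funext k; exact descPath_length r hr0 k
      rw [this, List.map_reverse, List.sum_reverse, sum_map_succ_range]
    have htot : multipathTotalLength (p1 :: tail)
        = p1.length + multipathTotalLength tail := by
      simp [multipathTotalLength]
    rw [htot, hlen1, hsum]
    obtain ⟨m, rfl⟩ : ∃ m, r = m + 1 := ⟨r - 1, by omega⟩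
    simp only [Nat.add_sub_cancel]
    rw [show m + 1 + 1 = m + 2 from rfl]
    have key := tri_succ m
    omega

/-- For `r ≥ 4`, the maximal total length of a multipath in the Dynkin diagram
of type `D_r` equals `r(r+1)/2 - 1`. -/
theorem dynkinD_max_multipath (r : ℕ) (hr : 4 ≤ r) :
    (∀ ps : List (List (Fin r)), IsMultipath (dynkinD r) ps →
      multipathTotalLength ps ≤ r * (r + 1) / 2 - 1) ∧
    (∃ ps : List (List (Fin r)), IsMultipath (dynkinD r) ps ∧
      multipathTotalLength ps = r * (r + 1) / 2 - 1) := by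
  exact ⟨fun ps h => upper_bound hr ps h, existence hr⟩
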